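/- Let T be a finite rooted tree equipped with a rank labeling r assigning a natural number to each node, and suppose that for every node v of T there exist r(v) pairwise distinct children c_1, …, c_{r(v)} of v such that for each i with 1 ≤ i ≤ r(v) and r(v) − i − 1 ≥ 0, r(c_i) ≥ r(v) − i − 1. Then the number of nodes of T is at least φ^{r(root)}, where φ = (1 + √5)/2 is the golden ratio and root is the root of T. -/

import Mathlib

/-- A finitely-branching rose tree whose nodes are labeled by natural-number
ranks: a tree is a root node (with its rank) together with a finite list of
subtrees. -/
inductive RankTree : Type where
  | node : ℕ → List RankTree → RankTree

namespace RankTree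

/-- The rank of the root node of a tree. -/
def rank : RankTree → ℕ
  | node r _ => r

/-- The list of subtrees rooted at the children of the root. -/
def children : RankTree → List RankTree
  | node _ cs => cs

/-- The number of nodes of a tree. -/
def size : RankTree → ℕ
  | node _ cs => 1 + (cs.attach.map (fun c => size c.1)).sum
decreasing_by
  have := List.sizeOf_lt_of_mem c.2
  cases c
  simp only [RankTree.node.sizeOf_spec] at *
  omega

/-- `IsNode v T` holds iff `v` is (the subtree rooted at) a node of `T`. -/
inductive IsNode : RankTree → RankTree → Prop
  | refl (T : RankTree) : IsNode T T
  | child {v c T : RankTree} : c ∈ T.children → IsNode v c → IsNode v T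

/-- A tree satisfies the rank invariant if every node `v` has `rank v`
pairwise distinct children `c_1, …, c_{rank v}` (given by an injection from
`Fin (rank v)` into the positions of the children of `v`) such that
`rank (c_i) ≥ rank v − i − 1` for `1 ≤ i ≤ rank v` (with truncated
subtraction, so the requirement is vacuous when `rank v − i − 1 < 0`). -/
def RankInvariant (T : RankTree) : Prop :=
  ∀ v : RankTree, IsNode v T →
    ∃ f : Fin v.rank → Fin v.children.length, Function.Injective f ∧
      ∀ i : Fin v.rank, (v.children.get (f i)).rank ≥ v.rank - (i.val + 1) - 1

end RankTree


/-!
The ranks guaranteed by the invariant make subtree sizes grow like Fibonacci numbers: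
by induction the `i`-th distinguished child of a node of rank `r` has at least
`φ ^ (r - i - 1)` nodes, and `1 + ∑ i < r, φ ^ (r - i - 1) ≥ φ ^ r` because
`φ ^ (n + 1) = φ ^ n + φ ^ (n - 1)`.
-/

open Real goldenRatio

/-- The truncated exponent `n - 1` makes the case `n = 0` read `x ≤ 2`. -/
lemma pow_succ_le_pow_add_pow_pred {x : ℝ} (hx0 : 0 ≤ x) (hx : x ^ 2 ≤ x + 1) :
    ∀ n : ℕ, x ^ (n + 1) ≤ x ^ n + x ^ (n - 1)
  | 0 => by norm_num; nlinarith
  | m + 1 => by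
    calc x ^ (m + 2) = x ^ m * x ^ 2 := by ring
      _ ≤ x ^ m * (x + 1) := by gcongr
      _ = x ^ (m + 1) + x ^ (m + 1 - 1) := by simp only [Nat.add_sub_cancel]; ring

lemma pow_le_one_add_sum_pow {x : ℝ} (hx0 : 0 ≤ x) (hx : x ^ 2 ≤ x + 1) (r : ℕ) :
    x ^ r ≤ 1 + ∑ i ∈ Finset.range r, x ^ (r - (i + 1) - 1) := by
  induction r with
  | zero => simp
  | succ n ih =>
    rw [Finset.sum_range_succ']
    simp only [Nat.add_sub_add_right, zero_add, Nat.add_sub_cancel]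
    linarith [pow_succ_le_pow_add_pow_pred hx0 hx n]

lemma List.sum_get_comp_le_sum_map {α : Type*} {r : ℕ} (l : List α) (g : α → ℕ)
    {f : Fin r → Fin l.length} (hf : Function.Injective f) :
    ∑ i, g (l.get (f i)) ≤ (l.map g).sum :=
  calc ∑ i, g (l.get (f i)) = ∑ j ∈ Finset.univ.map ⟨f, hf⟩, g (l.get j) :=
        (Finset.sum_map Finset.univ ⟨f, hf⟩ fun j => g (l.get j)).symm
    _ ≤ ∑ j, g (l.get j) := Finset.sum_le_sum_of_subset (Finset.subset_univ _)
    _ = (l.map g).sum := Fin.sum_univ_fun_getElem l g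

namespace RankTree

lemma size_node (r : ℕ) (cs : List RankTree) :
    (node r cs).size = 1 + (cs.map size).sum := by
  simp [size]

lemma size_lt_size_of_mem {c : RankTree} {r : ℕ} {cs : List RankTree} (hc : c ∈ cs) :
    c.size < (node r cs).size := by
  rw [size_node]
  have := List.le_sum_of_mem (List.mem_map_of_mem (f := size) hc)
  omega

lemma RankInvariant.of_mem_children {c T : RankTree} (hT : T.RankInvariant)
    (hc : c ∈ T.children) : c.RankInvariant :=
  fun v hv => hT v (IsNode.child hc hv)

theorem RankInvariant.goldenRatio_pow_rank_le_size :
    ∀ {T : RankTree}, T.RankInvariant → φ ^ T.rank ≤ T.size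
  | node r cs, hT => by
    obtain ⟨f, hf, hrank⟩ := hT _ (.refl _)
    have hchild (i : Fin r) : φ ^ (r - (i.val + 1) - 1) ≤ (cs.get (f i)).size :=
      (pow_le_pow_right₀ one_lt_goldenRatio.le (hrank i)).trans
        (goldenRatio_pow_rank_le_size (hT.of_mem_children (List.get_mem _ _)))
    calc φ ^ r ≤ 1 + ∑ i ∈ Finset.range r, φ ^ (r - (i + 1) - 1) :=
          pow_le_one_add_sum_pow goldenRatio_pos.le goldenRatio_sq.le r
      _ = 1 + ∑ i : Fin r, φ ^ (r - (i.val + 1) - 1) := by rw [Finset.sum_range]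
      _ ≤ 1 + ∑ i : Fin r, ((cs.get (f i)).size : ℝ) := by gcongr with i; exact hchild i
      _ ≤ (node r cs).size := by
          rw [size_node]
          exact_mod_cast Nat.add_le_add_left (List.sum_get_comp_le_sum_map cs size hf) 1
termination_by T => T.size
decreasing_by exact size_lt_size_of_mem (List.get_mem _ _)

end RankTree

/-- In a finite rooted tree satisfying the rank invariant, the number of nodes
is at least `φ^{rank(root)}`, where `φ = (1 + √5)/2` is the golden ratio. -/
theorem size_ge_goldenRatio_pow_of_rankInvariant (T : RankTree)
    (hT : T.RankInvariant) :
    (T.size : ℝ) ≥ ((1 + Real.sqrt 5) / 2) ^ T.rank :=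
  hT.goldenRatio_pow_rank_le_size
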